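/- Let φ : ℝ → ℝ be a homeomorphism with φ(0)=0 and f : [0,T]×ℝ×ℝ → ℝ continuous. Suppose: (1) there exists continuous c : [0,T] → ℝ with f(t,x,y) ≥ c(t) for all (t,x,y); (2) there exist M₁ < M₂ such that for all u ∈ C¹, if min u' ≥ M₂ then ∫₀ᵀ f(t,u,u') dt ≠ 0, and if max u' ≤ M₁ then ∫₀ᵀ f(t,u,u') dt ≠ 0. If λ ∈ (0,1) and u ∈ C¹ solves (φ(u'))' = λ f(t,u,u') with u(T) = u'(0) = u'(T), then ‖u‖_∞ + ‖u'‖_∞ < r(2+T), where L = max{|φ(M₂)|, |φ(M₁)|}, r = max{|φ⁻¹(L + 2‖c⁻‖_{L¹})|, |φ⁻¹(−L − 2‖c⁻‖_{L¹})|}, and c⁻ = max(−c, 0). -/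

import Mathlib

/-!
Integrating `(φ ∘ u')' = λ f(t, u, u')` over `[0, T]` and using `u'(0) = u'(T)` gives
`∫ f(t, u, u') = 0`, so by the sign hypothesis `u'` is neither `≥ M₂` nor `≤ M₁` everywhere,
and by connectedness `M₁ < u'(ω) < M₂` at some `ω`. The derivative `λ f ≥ -c⁻` of `φ ∘ u'` has
integral zero, hence `L¹`-norm at most `2 ‖c⁻‖₁`, so `φ ∘ u'` stays within `2 ‖c⁻‖₁` of
`φ (u' ω)` and `|u'| < r`. Finally `|u(T)| = |u'(0)| < r` and the mean value inequality give
`|u| < r (1 + T)`.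
-/

open Set MeasureTheory

theorem abs_lt_max_abs_of_strictMono_or_strictAnti {α β : Type*} [LinearOrder α]
    [AddCommGroup β] [LinearOrder β] [IsOrderedAddMonoid β] {g : α → β}
    (hg : StrictMono g ∨ StrictAnti g) {a b x : α} (hax : a < x) (hxb : x < b) :
    |g x| < max |g a| |g b| := by
  have key : ∀ p q y : β, p < y → y < q → |y| < max |p| |q| := fun p q y hpy hyq =>
    abs_lt.mpr ⟨(neg_le_neg (le_max_left _ _)).trans (neg_abs_le p) |>.trans_lt hpy,
      hyq.trans_le ((le_abs_self q).trans (le_max_right _ _))⟩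
  rcases hg with hg | hg
  · exact key _ _ _ (hg hax) (hg hxb)
  · exact max_comm |g b| |g a| ▸ key _ _ _ (hg hxb) (hg hax)

theorem IsPreconnected.exists_mem_apply_mem_Ioo {X α : Type*} [TopologicalSpace X]
    [LinearOrder α] [TopologicalSpace α] [OrderClosedTopology α] [DenselyOrdered α]
    {s : Set X} {g : X → α} (hs : IsPreconnected s) (hg : ContinuousOn g s) {m M : α}
    (hmM : m < M) (hlt : ∃ x ∈ s, g x < M) (hgt : ∃ x ∈ s, m < g x) :
    ∃ x ∈ s, g x ∈ Ioo m M := by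
  obtain ⟨x₁, hx₁, hx₁M⟩ := hlt
  obtain ⟨x₂, hx₂, hmx₂⟩ := hgt
  by_cases h₁ : m < g x₁
  · exact ⟨x₁, hx₁, h₁, hx₁M⟩
  by_cases h₂ : g x₂ < M
  · exact ⟨x₂, hx₂, hmx₂, h₂⟩
  push Not at h₁ h₂
  obtain ⟨y, hmy, hyM⟩ := exists_between hmM
  obtain ⟨x, hx, rfl⟩ := hs.intermediate_value hx₁ hx₂ hg ⟨h₁.trans hmy.le, hyM.le.trans h₂⟩
  exact ⟨x, hx, hmy, hyM⟩

section DerivWithinIcc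

variable {a b s t : ℝ} {g g' : ℝ → ℝ}

theorem integral_eq_sub_of_hasDerivWithinAt_Icc
    (hg : ∀ x ∈ Icc a b, HasDerivWithinAt g (g' x) (Icc a b) x)
    (hg' : ContinuousOn g' (Icc a b)) (hs : s ∈ Icc a b) (ht : t ∈ Icc a b) :
    ∫ x in s..t, g' x = g t - g s := by
  have hsub : uIcc s t ⊆ Icc a b := uIcc_subset_Icc hs ht
  refine intervalIntegral.integral_eq_sub_of_hasDeriv_right
    (fun x hx => (hg x (hsub hx)).continuousWithinAt.mono hsub) (fun x hx => ?_)
    ((hg'.mono hsub).intervalIntegrable)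
  have hx' : x ∈ Ioo a b := ⟨(le_min hs.1 ht.1).trans_lt hx.1, hx.2.trans_le (max_le hs.2 ht.2)⟩
  exact (hg x (Ioo_subset_Icc_self hx')).mono_of_mem_nhdsWithin (Icc_mem_nhdsGT_of_mem
    ⟨hx'.1.le, hx'.2⟩)

theorem abs_sub_le_integral_abs_of_hasDerivWithinAt_Icc (hab : a ≤ b)
    (hg : ∀ x ∈ Icc a b, HasDerivWithinAt g (g' x) (Icc a b) x)
    (hg' : ContinuousOn g' (Icc a b)) (hs : s ∈ Icc a b) (ht : t ∈ Icc a b) :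
    |g t - g s| ≤ ∫ x in a..b, |g' x| := by
  rw [← integral_eq_sub_of_hasDerivWithinAt_Icc hg hg' hs ht]
  calc |∫ x in s..t, g' x| ≤ |(∫ x in s..t, |g' x|)| := by
        simpa only [Real.norm_eq_abs] using
          intervalIntegral.norm_integral_le_abs_integral_norm (f := g') (a := s) (b := t)
    _ ≤ |(∫ x in a..b, |g' x|)| := by
        refine intervalIntegral.abs_integral_mono_interval ?_
          (Filter.Eventually.of_forall fun _ => abs_nonneg _)
          (hg'.abs.intervalIntegrable_of_Icc hab)
        apply uIoc_subset_uIoc_of_uIcc_subset_uIcc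
        rw [uIcc_of_le hab]
        exact uIcc_subset_Icc hs ht
    _ = ∫ x in a..b, |g' x| :=
        abs_of_nonneg (intervalIntegral.integral_nonneg hab fun _ _ => abs_nonneg _)

theorem abs_le_abs_add_mul_of_abs_deriv_le {C : ℝ}
    (hg : ∀ x ∈ Icc a b, HasDerivWithinAt g (g' x) (Icc a b) x)
    (hC : ∀ x ∈ Icc a b, |g' x| ≤ C) (hs : s ∈ Icc a b) (ht : t ∈ Icc a b) :
    |g t| ≤ |g s| + C * (b - a) := by
  have hmvt := Convex.norm_image_sub_le_of_norm_hasDerivWithin_le hg hC (convex_Icc a b) hs ht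
  rw [Real.norm_eq_abs, Real.norm_eq_abs] at hmvt
  have hdist : |t - s| ≤ b - a := abs_le.mpr ⟨by linarith [hs.2, ht.1], by linarith [hs.1, ht.2]⟩
  have hC₀ : 0 ≤ C := (abs_nonneg _).trans (hC s hs)
  linarith [abs_sub_abs_le_abs_sub (g t) (g s), mul_le_mul_of_nonneg_left hdist hC₀]

end DerivWithinIcc

theorem integral_abs_le_two_mul_of_integral_eq_zero {a b : ℝ} {F g : ℝ → ℝ} (hab : a ≤ b)
    (hF : IntervalIntegrable F volume a b) (hg : IntervalIntegrable g volume a b)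
    (hg₀ : ∀ t ∈ Icc a b, 0 ≤ g t) (hFg : ∀ t ∈ Icc a b, -g t ≤ F t)
    (hF₀ : ∫ t in a..b, F t = 0) :
    ∫ t in a..b, |F t| ≤ 2 * ∫ t in a..b, g t := by
  have hpt : ∀ t ∈ Icc a b, |F t| ≤ F t + 2 * g t := fun t ht =>
    abs_le.mpr ⟨by linarith [hFg t ht], by linarith [hg₀ t ht]⟩
  calc ∫ t in a..b, |F t| ≤ ∫ t in a..b, (F t + 2 * g t) :=
        intervalIntegral.integral_mono_on hab hF.abs (hF.add (hg.const_mul 2)) hpt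
    _ = 2 * ∫ t in a..b, g t := by
        rw [intervalIntegral.integral_add hF (hg.const_mul 2), hF₀,
          intervalIntegral.integral_const_mul, zero_add]

theorem stmt15_general (T : ℝ) (hT : 0 < T)
    (φ : ℝ ≃ₜ ℝ)
    (f : ℝ → ℝ → ℝ → ℝ)
    (c : ℝ → ℝ) (hcc : ContinuousOn c (Set.Icc 0 T))
    (hlb : ∀ t ∈ Set.Icc (0:ℝ) T, ∀ x y : ℝ, c t ≤ f t x y)
    (M₁ M₂ : ℝ) (hM : M₁ < M₂)
    (hyp2 : ∀ w w' : ℝ → ℝ,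
      (∀ t ∈ Set.Icc (0:ℝ) T, HasDerivWithinAt w (w' t) (Set.Icc 0 T) t) →
      ContinuousOn w' (Set.Icc 0 T) →
      ((∀ t ∈ Set.Icc (0:ℝ) T, M₂ ≤ w' t) →
        (∫ t in (0:ℝ)..T, f t (w t) (w' t)) ≠ 0) ∧
      ((∀ t ∈ Set.Icc (0:ℝ) T, w' t ≤ M₁) →
        (∫ t in (0:ℝ)..T, f t (w t) (w' t)) ≠ 0))
    (lam : ℝ) (hlam : 0 < lam ∧ lam < 1)
    (u u' v : ℝ → ℝ)
    (hu : ∀ t ∈ Set.Icc (0:ℝ) T, HasDerivWithinAt u (u' t) (Set.Icc 0 T) t)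
    (hu'c : ContinuousOn u' (Set.Icc 0 T))
    (hv : ∀ t ∈ Set.Icc (0:ℝ) T,
      HasDerivWithinAt (fun s => φ (u' s)) (v t) (Set.Icc 0 T) t)
    (hvc : ContinuousOn v (Set.Icc 0 T))
    (heq : ∀ t ∈ Set.Icc (0:ℝ) T, v t = lam * f t (u t) (u' t))
    (hbc : u T = u' 0 ∧ u' 0 = u' T) :
    sSup ((fun t => |u t|) '' Set.Icc 0 T) +
      sSup ((fun t => |u' t|) '' Set.Icc 0 T) <
    (max |φ.symm (max |φ M₂| |φ M₁| + 2 * ∫ t in (0:ℝ)..T, max (-c t) 0)|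
        |φ.symm (-(max |φ M₂| |φ M₁| + 2 * ∫ t in (0:ℝ)..T, max (-c t) 0))|) *
      (2 + T) := by
  set A := max |φ M₂| |φ M₁| + 2 * ∫ t in (0:ℝ)..T, max (-c t) 0
  set r := max |φ.symm A| |φ.symm (-A)|
  have h0 : (0:ℝ) ∈ Icc 0 T := left_mem_Icc.2 hT.le
  have hTmem : T ∈ Icc 0 T := right_mem_Icc.2 hT.le
  have hv₀ : ∫ t in (0:ℝ)..T, v t = 0 := by
    rw [integral_eq_sub_of_hasDerivWithinAt_Icc hv hvc h0 hTmem, hbc.2, sub_self]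
  have hF₀ : ∫ t in (0:ℝ)..T, f t (u t) (u' t) = 0 := by
    rw [intervalIntegral.integral_congr (fun t ht => heq t (uIcc_of_le hT.le ▸ ht)),
      intervalIntegral.integral_const_mul] at hv₀
    exact (mul_eq_zero.mp hv₀).resolve_left hlam.1.ne'
  obtain ⟨ω, hω, hωM⟩ := isPreconnected_Icc.exists_mem_apply_mem_Ioo hu'c hM
    (by by_contra! h; exact (hyp2 u u' hu hu'c).1 h hF₀)
    (by by_contra! h; exact (hyp2 u u' hu hu'c).2 h hF₀)
  have hv_int : ∫ t in (0:ℝ)..T, |v t| ≤ 2 * ∫ t in (0:ℝ)..T, max (-c t) 0 := by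
    refine integral_abs_le_two_mul_of_integral_eq_zero hT.le (hvc.intervalIntegrable_of_Icc hT.le)
      ((hcc.neg.sup continuousOn_const).intervalIntegrable_of_Icc hT.le)
      (fun _ _ => le_max_right _ _) (fun t ht => ?_) hv₀
    rw [heq t ht]
    nlinarith [hlb t ht (u t) (u' t), le_max_left (-c t) 0, le_max_right (-c t) 0]
  have hφu' : ∀ t ∈ Icc 0 T, |φ (u' t)| < A := fun t ht => by
    have hosc := abs_sub_le_integral_abs_of_hasDerivWithinAt_Icc hT.le hv hvc hω ht
    have hφω := max_comm |φ M₁| |φ M₂| ▸ abs_lt_max_abs_of_strictMono_or_strictAnti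
      (φ.continuous.strictMono_of_inj φ.injective) hωM.1 hωM.2
    linarith [abs_sub_abs_le_abs_sub (φ (u' t)) (φ (u' ω))]
  have hu'r : ∀ t ∈ Icc 0 T, |u' t| < r := fun t ht => by
    obtain ⟨hlt, hgt⟩ := abs_lt.mp (hφu' t ht)
    simpa [r, max_comm] using abs_lt_max_abs_of_strictMono_or_strictAnti
      (φ.symm.continuous.strictMono_of_inj φ.symm.injective) hlt hgt
  have hur : ∀ t ∈ Icc 0 T, |u t| < r * (1 + T) := fun t ht => by
    have := abs_le_abs_add_mul_of_abs_deriv_le hu (fun x hx => (hu'r x hx).le) hTmem ht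
    linarith [hbc.1 ▸ hu'r 0 h0]
  have huc : ContinuousOn u (Icc 0 T) := fun t ht => (hu t ht).continuousWithinAt
  linarith [(isCompact_Icc.sSup_lt_iff_of_continuous ⟨0, h0⟩ huc.abs _).2 hur,
    (isCompact_Icc.sSup_lt_iff_of_continuous ⟨0, h0⟩ hu'c.abs _).2 hu'r]

theorem stmt15 (T : ℝ) (hT : 0 < T)
    (φ : ℝ ≃ₜ ℝ) (hφ0 : φ 0 = 0)
    (f : ℝ → ℝ → ℝ → ℝ)
    (hf : Continuous fun p : ℝ × ℝ × ℝ => f p.1 p.2.1 p.2.2)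
    (c : ℝ → ℝ) (hcc : ContinuousOn c (Set.Icc 0 T))
    (hlb : ∀ t ∈ Set.Icc (0:ℝ) T, ∀ x y : ℝ, c t ≤ f t x y)
    (M₁ M₂ : ℝ) (hM : M₁ < M₂)
    (hyp2 : ∀ w w' : ℝ → ℝ,
      (∀ t ∈ Set.Icc (0:ℝ) T, HasDerivWithinAt w (w' t) (Set.Icc 0 T) t) →
      ContinuousOn w' (Set.Icc 0 T) →
      ((∀ t ∈ Set.Icc (0:ℝ) T, M₂ ≤ w' t) →
        (∫ t in (0:ℝ)..T, f t (w t) (w' t)) ≠ 0) ∧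
      ((∀ t ∈ Set.Icc (0:ℝ) T, w' t ≤ M₁) →
        (∫ t in (0:ℝ)..T, f t (w t) (w' t)) ≠ 0))
    (lam : ℝ) (hlam : 0 < lam ∧ lam < 1)
    (u u' v : ℝ → ℝ)
    (hu : ∀ t ∈ Set.Icc (0:ℝ) T, HasDerivWithinAt u (u' t) (Set.Icc 0 T) t)
    (hu'c : ContinuousOn u' (Set.Icc 0 T))
    (hv : ∀ t ∈ Set.Icc (0:ℝ) T,
      HasDerivWithinAt (fun s => φ (u' s)) (v t) (Set.Icc 0 T) t)
    (hvc : ContinuousOn v (Set.Icc 0 T))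
    (heq : ∀ t ∈ Set.Icc (0:ℝ) T, v t = lam * f t (u t) (u' t))
    (hbc : u T = u' 0 ∧ u' 0 = u' T) :
    sSup ((fun t => |u t|) '' Set.Icc 0 T) +
      sSup ((fun t => |u' t|) '' Set.Icc 0 T) <
    (max |φ.symm (max |φ M₂| |φ M₁| + 2 * ∫ t in (0:ℝ)..T, max (-c t) 0)|
        |φ.symm (-(max |φ M₂| |φ M₁| + 2 * ∫ t in (0:ℝ)..T, max (-c t) 0))|) *
      (2 + T) :=
  stmt15_general T hT φ f c hcc hlb M₁ M₂ hM hyp2 lam hlam u u' v hu hu'c hv hvc heq hbc
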